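/- Let O and P be finite posets on disjoint ground sets with O nonempty, and let m ≥ 0. Then e(m, O ⊕ P) = Σ_{B ⊆ Min O} (−1)^{#B} · (d(O − B) + d(P) − 1)^m; that is, the exponential function of the ordinal sum O ⊕ P is obtained from the inclusion–exclusion representation of e(m,O) by increasing every base number by d(P) − 1. -/
import Mathlib


open scoped Classical

variable {α : Type*} [DecidableEq α]

/-- `q` is a partial order relation with ground set `S`: it is a set of pairs
contained in `S × S`, reflexive on `S`, transitive and antisymmetric. -/
def IsPOon (S : Finset α) (q : Finset (α × α)) : Prop :=
  q ⊆ S ×ˢ S ∧ (∀ x ∈ S, (x, x) ∈ q) ∧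
  (∀ x y z : α, (x, y) ∈ q → (y, z) ∈ q → (x, z) ∈ q) ∧
  (∀ x y : α, (x, y) ∈ q → (y, x) ∈ q → x = y)

/-- The relation induced on a subset `A` of the ground set. -/
def restrictRel (q : Finset (α × α)) (A : Finset α) : Finset (α × α) :=
  q.filter fun r => r.1 ∈ A ∧ r.2 ∈ A

/-- The downsets of the poset `(S, q)`. -/
noncomputable def downsets (S : Finset α) (q : Finset (α × α)) : Finset (Finset α) :=
  S.powerset.filter fun D => ∀ y ∈ D, ∀ x : α, (x, y) ∈ q → x ∈ D

/-- `d(P)`, the number of downsets of the poset `(S, q)`. -/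
noncomputable def dnum (S : Finset α) (q : Finset (α × α)) : ℕ :=
  (downsets S q).card

/-- The upsets of the poset `(S, q)`. -/
noncomputable def upsets (S : Finset α) (q : Finset (α × α)) : Finset (Finset α) :=
  S.powerset.filter fun U => ∀ x ∈ U, ∀ y : α, (x, y) ∈ q → y ∈ U

/-- Down-closure `QA = {x : x ≤_Q a for some a ∈ A}`. -/
def dcl (q : Finset (α × α)) (A : Finset α) : Finset α :=
  (q.filter fun r => r.2 ∈ A).image Prod.fst

/-- Up-closure `AQ = {y : a ≤_Q y for some a ∈ A}`. -/
def ucl (q : Finset (α × α)) (A : Finset α) : Finset α :=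
  (q.filter fun r => r.1 ∈ A).image Prod.snd

/-- The set of minimal elements of the poset `(S, q)`. -/
noncomputable def minset (S : Finset α) (q : Finset (α × α)) : Finset α :=
  S.filter fun x => ∀ y : α, (y, x) ∈ q → y = x

/-- `E(M, P)`: the partial orders on `M ∪ K` inducing `p` on `K` whose set of
minimal elements is exactly `M`. -/
noncomputable def extPOs (M K : Finset α) (p : Finset (α × α)) :
    Finset (Finset (α × α)) :=
  ((M ∪ K) ×ˢ (M ∪ K)).powerset.filter fun q =>
    IsPOon (M ∪ K) q ∧ restrictRel q K = p ∧ minset (M ∪ K) q = M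

/-- `A` is an antichain of the poset `(S, q)`. -/
def isAntichain (S : Finset α) (q : Finset (α × α)) (A : Finset α) : Prop :=
  A ⊆ S ∧ ∀ x ∈ A, ∀ y ∈ A, (x, y) ∈ q → x = y

/-- The posets `(S, q)` and `(T, r)` are order-isomorphic. -/
def POIso {β : Type*} (S : Finset α) (q : Finset (α × α))
    (T : Finset β) (r : Finset (β × β)) : Prop :=
  ∃ f : α → β, Set.BijOn f ↑S ↑T ∧ ∀ x ∈ S, ∀ y ∈ S, ((x, y) ∈ q ↔ (f x, f y) ∈ r)

/-- `C` is a chain of the poset `(S, q)`. -/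
def isChainOn (S : Finset α) (q : Finset (α × α)) (C : Finset α) : Prop :=
  C ⊆ S ∧ ∀ x ∈ C, ∀ y ∈ C, (x, y) ∈ q ∨ (y, x) ∈ q

/-- The height of the poset `(S, q)`: the maximal size of a chain. -/
noncomputable def heightP (S : Finset α) (q : Finset (α × α)) : ℕ :=
  (S.powerset.filter (isChainOn S q)).sup Finset.card

set_option linter.unusedSectionVars false
set_option linter.unusedVariables false

-- ### auxiliary lemmas

lemma mem_upsets {S : Finset α} {q : Finset (α×α)} {U : Finset α} :
    U ∈ upsets S q ↔ U ⊆ S ∧ ∀ x ∈ U, ∀ y : α, (x,y) ∈ q → y ∈ U := by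
  simp [upsets, Finset.mem_filter, Finset.mem_powerset]

lemma mem_downsets {S : Finset α} {q : Finset (α×α)} {D : Finset α} :
    D ∈ downsets S q ↔ D ⊆ S ∧ ∀ y ∈ D, ∀ x : α, (x,y) ∈ q → x ∈ D := by
  simp [downsets, Finset.mem_filter, Finset.mem_powerset]

lemma mem_minset {S : Finset α} {q : Finset (α×α)} {x : α} :
    x ∈ minset S q ↔ x ∈ S ∧ ∀ y : α, (y,x) ∈ q → y = x := by
  simp [minset, Finset.mem_filter]

lemma empty_mem_upsets (S : Finset α) (q : Finset (α×α)) : ∅ ∈ upsets S q := by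
  simp [mem_upsets]

lemma empty_mem_downsets (S : Finset α) (q : Finset (α×α)) : ∅ ∈ downsets S q := by
  simp [mem_downsets]

lemma card_upsets (S : Finset α) (q : Finset (α × α)) (hq : q ⊆ S ×ˢ S) :
    (upsets S q).card = dnum S q := by
  apply Finset.card_bij (fun U _ => S \ U)
  · intro U hU
    rw [mem_upsets] at hU
    rw [mem_downsets]
    refine ⟨Finset.sdiff_subset, ?_⟩
    intro y hy x hxy
    have hxS : x ∈ S := (Finset.mem_product.1 (hq hxy)).1
    rw [Finset.mem_sdiff] at hy ⊢
    exact ⟨hxS, fun hxU => hy.2 (hU.2 x hxU y hxy)⟩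
  · intro U hU V hV h
    rw [mem_upsets] at hU hV
    have := congrArg (S \ ·) h
    simpa [Finset.sdiff_sdiff_eq_self hU.1, Finset.sdiff_sdiff_eq_self hV.1] using this
  · intro D hD
    rw [mem_downsets] at hD
    refine ⟨S \ D, ?_, ?_⟩
    · rw [mem_upsets]
      refine ⟨Finset.sdiff_subset, ?_⟩
      intro x hx y hxy
      have hyS : y ∈ S := (Finset.mem_product.1 (hq hxy)).2
      rw [Finset.mem_sdiff] at hx ⊢
      exact ⟨hyS, fun hyD => hx.2 (hD.2 y hyD x hxy)⟩
    · exact Finset.sdiff_sdiff_eq_self hD.1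

lemma restrictRel_subset_product (q : Finset (α×α)) (A : Finset α) :
    restrictRel q A ⊆ A ×ˢ A := by
  intro r hr
  rw [restrictRel, Finset.mem_filter] at hr
  exact Finset.mem_product.2 hr.2

-- ### ordinal sum lemmas
section OSum
variable {X Y : Finset α} {o p : Finset (α×α)}
variable (hXY : Disjoint X Y) (ho : IsPOon X o) (hp : IsPOon Y p)

include hXY ho hp in
lemma isPOon_osum : IsPOon (X ∪ Y) (o ∪ p ∪ X ×ˢ Y) := by
  obtain ⟨hos, hor, hot, hoa⟩ := ho
  obtain ⟨hps, hpr, hpt, hpa⟩ := hp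
  have hoX : ∀ {x y : α}, (x,y) ∈ o → x ∈ X ∧ y ∈ X := fun h =>
    Finset.mem_product.1 (hos h)
  have hpY : ∀ {x y : α}, (x,y) ∈ p → x ∈ Y ∧ y ∈ Y := fun h =>
    Finset.mem_product.1 (hps h)
  have hd : ∀ {x : α}, x ∈ X → x ∈ Y → False := fun hx hy =>
    Finset.disjoint_left.1 hXY hx hy
  refine ⟨?_, ?_, ?_, ?_⟩
  · intro r hr
    simp only [Finset.mem_union, Finset.mem_product] at hr ⊢
    rcases hr with (h | h) | h
    · exact ⟨Or.inl (hoX h).1, Or.inl (hoX h).2⟩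
    · exact ⟨Or.inr (hpY h).1, Or.inr (hpY h).2⟩
    · exact ⟨Or.inl h.1, Or.inr h.2⟩
  · intro x hx
    rcases Finset.mem_union.1 hx with hx | hx
    · exact Finset.mem_union_left _ (Finset.mem_union_left _ (hor x hx))
    · exact Finset.mem_union_left _ (Finset.mem_union_right _ (hpr x hx))
  · intro x y z hxy hyz
    simp only [Finset.mem_union, Finset.mem_product] at hxy hyz ⊢
    rcases hxy with (h1 | h1) | h1 <;> rcases hyz with (h2 | h2) | h2
    · exact Or.inl (Or.inl (hot x y z h1 h2))
    · exact absurd (hoX h1).2 (fun h => hd h (hpY h2).1)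
    · exact Or.inr ⟨(hoX h1).1, h2.2⟩
    · exact absurd (hoX h2).1 (fun h => hd h (hpY h1).2)
    · exact Or.inl (Or.inr (hpt x y z h1 h2))
    · exact absurd h2.1 (fun h => hd h (hpY h1).2)
    · exact absurd (hoX h2).1 (fun h => hd h h1.2)
    · exact Or.inr ⟨h1.1, (hpY h2).2⟩
    · exact absurd h2.1 (fun h => hd h h1.2)
  · intro x y hxy hyx
    simp only [Finset.mem_union, Finset.mem_product] at hxy hyx
    rcases hxy with (h1 | h1) | h1 <;> rcases hyx with (h2 | h2) | h2
    · exact hoa x y h1 h2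
    · exact absurd (hoX h1).1 (fun h => hd h (hpY h2).2)
    · exact absurd (hoX h1).1 (fun h => hd h h2.2)
    · exact absurd (hoX h2).1 (fun h => hd h (hpY h1).2)
    · exact hpa x y h1 h2
    · exact absurd h2.1 (fun h => hd h (hpY h1).2)
    · exact absurd (hoX h2).1 (fun h => hd h h1.2)
    · exact absurd h1.1 (fun h => hd h (hpY h2).2)
    · exact absurd h1.1 (fun h => hd h h2.2)

include hXY ho hp in
lemma minset_osum (hX : X.Nonempty) :
    minset (X ∪ Y) (o ∪ p ∪ X ×ˢ Y) = minset X o := by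
  have hd : ∀ {x : α}, x ∈ X → x ∈ Y → False := fun hx hy =>
    Finset.disjoint_left.1 hXY hx hy
  ext x
  rw [mem_minset, mem_minset]
  constructor
  · rintro ⟨hxS, hmin⟩
    have hxX : x ∈ X := by
      rcases Finset.mem_union.1 hxS with h | h
      · exact h
      · obtain ⟨x0, hx0⟩ := hX
        have := hmin x0 (by
          simp only [Finset.mem_union]
          exact Or.inr (Finset.mem_product.2 ⟨hx0, h⟩))
        exact absurd h (fun hh => hd (this ▸ hx0) hh)
    exact ⟨hxX, fun y hy => hmin y (by simp [Finset.mem_union, hy])⟩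
  · rintro ⟨hxX, hmin⟩
    refine ⟨Finset.mem_union_left _ hxX, ?_⟩
    intro y hy
    simp only [Finset.mem_union, Finset.mem_product] at hy
    rcases hy with (h | h) | h
    · exact hmin y h
    · exact absurd hxX (fun hh => hd hh (Finset.mem_product.1 (hp.1 h)).2)
    · exact absurd hxX (fun hh => hd hh h.2)

include hXY ho hp in
lemma card_upsets_filter_osum (hX : X.Nonempty) {B : Finset α} (hB : B ⊆ minset X o) :
    (((upsets (X ∪ Y) (o ∪ p ∪ X ×ˢ Y)).filter fun U => Disjoint U B).card : ℤ)
      = (dnum (X \ B) (restrictRel o (X \ B)) : ℤ) + (dnum Y p : ℤ) - 1 := by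
  have hd : ∀ {x : α}, x ∈ X → x ∈ Y → False := fun hx hy =>
    Finset.disjoint_left.1 hXY hx hy
  have hBX : B ⊆ X := hB.trans (Finset.filter_subset _ _)
  set q0 := o ∪ p ∪ X ×ˢ Y with hq0
  set o' := restrictRel o (X \ B) with ho'
  set G := (upsets (X ∪ Y) q0).filter fun U => Disjoint U B with hG
  -- key fact: if U ∈ G and U ∩ X nonempty then Y ⊆ U
  have hYsub : ∀ U ∈ G, (U ∩ X).Nonempty → Y ⊆ U := by
    intro U hU hne
    obtain ⟨x, hx⟩ := hne
    rw [Finset.mem_inter] at hx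
    have hU' := (Finset.mem_filter.1 hU).1
    rw [mem_upsets] at hU'
    intro y hy
    exact hU'.2 x hx.1 y (by
      simp only [hq0, Finset.mem_union]
      exact Or.inr (Finset.mem_product.2 ⟨hx.2, hy⟩))
  have hcard1 : (G.filter fun U => (U ∩ X).Nonempty).card
      = ((upsets (X \ B) o').card - 1 : ℕ) := by
    have : (G.filter fun U => (U ∩ X).Nonempty).card
        = ((upsets (X \ B) o').erase ∅).card := by
      apply Finset.card_bij (fun U _ => U ∩ X)
      · intro U hU
        rw [Finset.mem_filter] at hU
        obtain ⟨hUG, hne⟩ := hU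
        rw [Finset.mem_erase]
        have hG1 := Finset.mem_filter.1 hUG
        rw [mem_upsets] at hG1
        constructor
        · exact fun h => by simp [h] at hne
        · rw [mem_upsets]
          constructor
          · intro z hz
            rw [Finset.mem_inter] at hz
            rw [Finset.mem_sdiff]
            exact ⟨hz.2, fun hzB => Finset.disjoint_left.1 hG1.2 hz.1 hzB⟩
          · intro z hz w hzw
            rw [Finset.mem_inter] at hz
            rw [ho', restrictRel, Finset.mem_filter] at hzw
            rw [Finset.mem_inter]
            refine ⟨hG1.1.2 z hz.1 w ?_, (Finset.mem_sdiff.1 hzw.2.2).1⟩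
            simp only [hq0, Finset.mem_union]
            exact Or.inl (Or.inl hzw.1)
      · intro U hU V hV h
        rw [Finset.mem_filter] at hU hV
        have hYU := hYsub U hU.1 hU.2
        have hYV := hYsub V hV.1 (h ▸ hU.2)
        have hUs : U ⊆ X ∪ Y := (mem_upsets.1 (Finset.mem_filter.1 hU.1).1).1
        have hVs : V ⊆ X ∪ Y := (mem_upsets.1 (Finset.mem_filter.1 hV.1).1).1
        have eU : U = (U ∩ X) ∪ Y := by
          ext z
          simp only [Finset.mem_union, Finset.mem_inter]
          constructor
          · intro hz
            rcases Finset.mem_union.1 (hUs hz) with h' | h'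
            · exact Or.inl ⟨hz, h'⟩
            · exact Or.inr h'
          · rintro (⟨hz, _⟩ | hz)
            · exact hz
            · exact hYU hz
        have eV : V = (V ∩ X) ∪ Y := by
          ext z
          simp only [Finset.mem_union, Finset.mem_inter]
          constructor
          · intro hz
            rcases Finset.mem_union.1 (hVs hz) with h' | h'
            · exact Or.inl ⟨hz, h'⟩
            · exact Or.inr h'
          · rintro (⟨hz, _⟩ | hz)
            · exact hz
            · exact hYV hz
        rw [eU, eV, h]
      · intro V hV
        rw [Finset.mem_erase, mem_upsets] at hV
        obtain ⟨hVne, hVsub, hVup⟩ := hV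
        have hVX : V ⊆ X := hVsub.trans (Finset.sdiff_subset)
        refine ⟨V ∪ Y, ?_, ?_⟩
        · rw [Finset.mem_filter]
          constructor
          · rw [Finset.mem_filter]
            constructor
            · rw [mem_upsets]
              constructor
              · exact Finset.union_subset_union hVX (le_refl Y)
              · intro z hz w hzw
                simp only [hq0, Finset.mem_union, Finset.mem_product] at hzw
                rcases Finset.mem_union.1 hz with hzV | hzY
                · rcases hzw with (h' | h') | h'
                  · -- z ∈ V, (z,w) ∈ o; need w ∈ V
                    have hzXB := hVsub hzV
                    have hwX : w ∈ X := (Finset.mem_product.1 (ho.1 h')).2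
                    have hwB : w ∉ B := by
                      intro hwB
                      have := (mem_minset.1 (hB hwB)).2 z h'
                      rw [Finset.mem_sdiff] at hzXB
                      exact hzXB.2 (this ▸ hwB)
                    refine Finset.mem_union_left _ (hVup z hzV w ?_)
                    rw [ho', restrictRel, Finset.mem_filter]
                    exact ⟨h', hVsub hzV, Finset.mem_sdiff.2 ⟨hwX, hwB⟩⟩
                  · exact absurd (hVX hzV) (fun hh => hd hh (Finset.mem_product.1 (hp.1 h')).1)
                  · exact Finset.mem_union_right _ h'.2
                · rcases hzw with (h' | h') | h'
                  · exact absurd hzY (fun hh => hd (Finset.mem_product.1 (ho.1 h')).1 hh)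
                  · exact Finset.mem_union_right _ (Finset.mem_product.1 (hp.1 h')).2
                  · exact absurd hzY (fun hh => hd h'.1 hh)
            · rw [Finset.disjoint_union_left]
              constructor
              · refine Finset.disjoint_left.2 ?_
                intro z hz hzB
                exact (Finset.mem_sdiff.1 (hVsub hz)).2 hzB
              · refine Finset.disjoint_left.2 ?_
                intro z hz hzB
                exact hd (hBX hzB) hz
          · obtain ⟨v, hv⟩ := Finset.nonempty_iff_ne_empty.2 hVne
            exact ⟨v, Finset.mem_inter.2 ⟨Finset.mem_union_left _ hv, hVX hv⟩⟩
        · show (V ∪ Y) ∩ X = V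
          have hYX : Y ∩ X = ∅ := by
            refine Finset.eq_empty_iff_forall_notMem.2 fun z hz => ?_
            rw [Finset.mem_inter] at hz
            exact hd hz.2 hz.1
          rw [Finset.union_inter_distrib_right, Finset.inter_eq_left.2 hVX, hYX,
            Finset.union_empty]
    rw [this, Finset.card_erase_of_mem (empty_mem_upsets _ _)]
  have hcard2 : (G.filter fun U => ¬(U ∩ X).Nonempty).card = (upsets Y p).card := by
    apply Finset.card_bij (fun U _ => U)
    · intro U hU
      rw [Finset.mem_filter] at hU
      obtain ⟨hUG, hne⟩ := hU
      rw [Finset.not_nonempty_iff_eq_empty] at hne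
      have hG1 := Finset.mem_filter.1 hUG
      rw [mem_upsets] at hG1
      have hUY : U ⊆ Y := by
        intro z hz
        rcases Finset.mem_union.1 (hG1.1.1 hz) with h | h
        · exact absurd (Finset.mem_inter.2 ⟨hz, h⟩) (by simp [hne])
        · exact h
      rw [mem_upsets]
      refine ⟨hUY, fun z hz w hzw => hG1.1.2 z hz w ?_⟩
      simp only [hq0, Finset.mem_union]
      exact Or.inl (Or.inr hzw)
    · intro U _ V _ h; exact h
    · intro U hU
      rw [mem_upsets] at hU
      refine ⟨U, ?_, rfl⟩
      rw [Finset.mem_filter, Finset.mem_filter]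
      refine ⟨⟨?_, ?_⟩, ?_⟩
      · rw [mem_upsets]
        refine ⟨hU.1.trans Finset.subset_union_right, ?_⟩
        intro z hz w hzw
        simp only [hq0, Finset.mem_union, Finset.mem_product] at hzw
        rcases hzw with (h' | h') | h'
        · exact absurd (hU.1 hz) (fun hh => hd (Finset.mem_product.1 (ho.1 h')).1 hh)
        · exact hU.2 z hz w h'
        · exact absurd (hU.1 hz) (fun hh => hd h'.1 hh)
      · refine Finset.disjoint_left.2 ?_
        intro z hz hzB
        exact hd (hBX hzB) (hU.1 hz)
      · rw [Finset.not_nonempty_iff_eq_empty]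
        refine Finset.eq_empty_iff_forall_notMem.2 fun z hz => ?_
        rw [Finset.mem_inter] at hz
        exact hd hz.2 (hU.1 hz.1)
  have hsplit := Finset.card_filter_add_card_filter_not
    (s := G) (p := fun U => (U ∩ X).Nonempty)
  have h1 : 1 ≤ (upsets (X \ B) o').card :=
    Finset.card_pos.2 ⟨∅, empty_mem_upsets _ _⟩
  have e1 : (upsets (X \ B) o').card = dnum (X \ B) o' :=
    card_upsets _ _ (restrictRel_subset_product o (X \ B))
  have e2 : (upsets Y p).card = dnum Y p := card_upsets _ _ hp.1
  have h1' : 1 ≤ dnum (X \ B) o' := e1 ▸ h1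
  rw [← hsplit, hcard1, hcard2, e1, e2]
  omega
end OSum

-- ### the extension map and main counting lemma
section Main
variable (M : Finset α) (q0 : Finset (α × α))

def extMap (f : {a : α // a ∈ M} → Finset α) : Finset (α × α) :=
  q0 ∪ M.attach.biUnion (fun a => {a.1} ×ˢ insert a.1 (f a))

lemma mem_extMap {f : {a : α // a ∈ M} → Finset α} {x y : α} :
    (x, y) ∈ extMap M q0 f ↔
      (x, y) ∈ q0 ∨ ∃ h : x ∈ M, (y = x ∨ y ∈ f ⟨x, h⟩) := by
  simp only [extMap, Finset.mem_union, Finset.mem_biUnion, Finset.mem_attach, true_and,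
    Finset.mem_product, Finset.mem_singleton, Finset.mem_insert]
  constructor
  · rintro (h | ⟨a, rfl, hy⟩)
    · exact Or.inl h
    · exact Or.inr ⟨a.2, hy⟩
  · rintro (h | ⟨hm, hy⟩)
    · exact Or.inl h
    · exact Or.inr ⟨⟨x, hm⟩, rfl, hy⟩

lemma mem_extPOs {K : Finset α} {p q : Finset (α × α)} :
    q ∈ extPOs M K p ↔ q ⊆ (M ∪ K) ×ˢ (M ∪ K) ∧ IsPOon (M ∪ K) q ∧
      restrictRel q K = p ∧ minset (M ∪ K) q = M := by
  rw [extPOs, Finset.mem_filter, Finset.mem_powerset]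

variable {M q0} {S : Finset α}

lemma extMap_subset_product (hMS : Disjoint M S) (hq : IsPOon S q0)
    {f : {a : α // a ∈ M} → Finset α} (hfs : ∀ a, f a ⊆ S) :
    extMap M q0 f ⊆ (M ∪ S) ×ˢ (M ∪ S) := by
  rintro ⟨x, y⟩ hr
  rw [mem_extMap] at hr
  rw [Finset.mem_product]
  rcases hr with h | ⟨hm, h | h⟩
  · have := Finset.mem_product.1 (hq.1 h)
    exact ⟨Finset.mem_union_right _ this.1, Finset.mem_union_right _ this.2⟩
  · subst h; exact ⟨Finset.mem_union_left _ hm, Finset.mem_union_left _ hm⟩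
  · exact ⟨Finset.mem_union_left _ hm, Finset.mem_union_right _ (hfs _ h)⟩

lemma extMap_mem (hMS : Disjoint M S) (hq : IsPOon S q0)
    (f : {a : α // a ∈ M} → Finset α)
    (hf : ∀ a, f a ∈ upsets S q0)
    (hcov : ∀ x ∈ minset S q0, ∃ a, x ∈ f a) :
    extMap M q0 f ∈ extPOs M S q0 := by
  have hfs : ∀ a, f a ⊆ S := fun a => (mem_upsets.1 (hf a)).1
  have hfc : ∀ a, ∀ x ∈ f a, ∀ y, (x, y) ∈ q0 → y ∈ f a := fun a => (mem_upsets.1 (hf a)).2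
  obtain ⟨hqs, hqr, hqt, hqa⟩ := hq
  have hq2 : ∀ {x y : α}, (x, y) ∈ q0 → x ∈ S ∧ y ∈ S := fun h => Finset.mem_product.1 (hqs h)
  have hd : ∀ {x : α}, x ∈ M → x ∈ S → False := fun hx hy => Finset.disjoint_left.1 hMS hx hy
  rw [mem_extPOs]
  refine ⟨extMap_subset_product hMS ⟨hqs, hqr, hqt, hqa⟩ hfs,
    ⟨extMap_subset_product hMS ⟨hqs, hqr, hqt, hqa⟩ hfs, ?_, ?_, ?_⟩, ?_, ?_⟩
  · -- reflexivity
    intro x hx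
    rw [mem_extMap]
    rcases Finset.mem_union.1 hx with h | h
    · exact Or.inr ⟨h, Or.inl rfl⟩
    · exact Or.inl (hqr x h)
  · -- transitivity
    intro x y z hxy hyz
    rw [mem_extMap] at hxy hyz ⊢
    rcases hxy with h1 | ⟨hm1, h1 | h1⟩
    · rcases hyz with h2 | ⟨hm2, h2⟩
      · exact Or.inl (hqt x y z h1 h2)
      · exact absurd (hq2 h1).2 (fun hh => hd hm2 hh)
    · subst h1
      rcases hyz with h2 | ⟨hm2, h2 | h2⟩
      · exact Or.inl h2
      · exact Or.inr ⟨hm1, Or.inl h2⟩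
      · exact Or.inr ⟨hm1, Or.inr h2⟩
    · rcases hyz with h2 | ⟨hm2, h2⟩
      · exact Or.inr ⟨hm1, Or.inr (hfc _ y h1 z h2)⟩
      · exact absurd (hfs _ h1) (fun hh => hd hm2 hh)
  · -- antisymmetry
    intro x y hxy hyx
    rw [mem_extMap] at hxy hyx
    rcases hxy with h1 | ⟨hm1, h1 | h1⟩
    · rcases hyx with h2 | ⟨hm2, h2⟩
      · exact hqa x y h1 h2
      · exact absurd (hq2 h1).2 (fun hh => hd hm2 hh)
    · exact h1.symm
    · rcases hyx with h2 | ⟨hm2, h2⟩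
      · exact absurd (hq2 h2).2 (fun hh => hd hm1 hh)
      · exact absurd (hfs _ h1) (fun hh => hd hm2 hh)
  · -- restriction
    apply Finset.ext
    rintro ⟨x, y⟩
    simp only [restrictRel, Finset.mem_filter, mem_extMap]
    constructor
    · rintro ⟨h1 | ⟨hm, _⟩, hx, hy⟩
      · exact h1
      · exact absurd hx (fun hh => hd hm hh)
    · intro h
      exact ⟨Or.inl h, (hq2 h).1, (hq2 h).2⟩
  · -- minset
    apply Finset.ext
    intro x
    rw [mem_minset]
    constructor
    · rintro ⟨hxMS, hmin⟩
      by_contra hxM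
      have hxS : x ∈ S := by
        rcases Finset.mem_union.1 hxMS with h | h
        · exact absurd h hxM
        · exact h
      by_cases hminS : ∀ y, (y, x) ∈ q0 → y = x
      · obtain ⟨a, ha⟩ := hcov x (mem_minset.2 ⟨hxS, hminS⟩)
        have : (a.1, x) ∈ extMap M q0 f := by
          rw [mem_extMap]
          exact Or.inr ⟨a.2, Or.inr ha⟩
        exact hxM ((hmin a.1 this) ▸ a.2)
      · push_neg at hminS
        obtain ⟨y, hy, hyx⟩ := hminS
        exact hyx (hmin y (by rw [mem_extMap]; exact Or.inl hy))
    · intro hxM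
      refine ⟨Finset.mem_union_left _ hxM, ?_⟩
      intro y hy
      rw [mem_extMap] at hy
      rcases hy with h | ⟨hm, h | h⟩
      · exact absurd (hq2 h).2 (fun hh => hd hxM hh)
      · exact h ▸ rfl
      · exact absurd (hfs _ h) (fun hh => hd hxM hh)

lemma extMap_injOn (hMS : Disjoint M S) (hq : q0 ⊆ S ×ˢ S)
    {f g : {a : α // a ∈ M} → Finset α}
    (hfs : ∀ a, f a ⊆ S) (hgs : ∀ a, g a ⊆ S)
    (h : extMap M q0 f = extMap M q0 g) : f = g := by
  have hd : ∀ {x : α}, x ∈ M → x ∈ S → False := fun hx hy => Finset.disjoint_left.1 hMS hx hy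
  have key : ∀ (f' g' : {a : α // a ∈ M} → Finset α), (∀ a, f' a ⊆ S) → (∀ a, g' a ⊆ S) →
      extMap M q0 f' = extMap M q0 g' → ∀ a, f' a ⊆ g' a := by
    intro f' g' hf' hg' hEq a y hy
    have h1 : (a.1, y) ∈ extMap M q0 f' := by
      rw [mem_extMap]; exact Or.inr ⟨a.2, Or.inr hy⟩
    rw [hEq, mem_extMap] at h1
    rcases h1 with h1 | ⟨hm, h1 | h1⟩
    · exact absurd (Finset.mem_product.1 (hq h1)).1 (fun hh => hd a.2 hh)
    · exact absurd (hf' a hy) (fun hh => hd (h1 ▸ a.2) hh)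
    · exact h1
  funext a
  exact subset_antisymm (key f g hfs hgs h a) (key g f hgs hfs h.symm a)
end Main

section Main2
variable {M S : Finset α} {q0 : Finset (α × α)}

lemma extPOs_surj (hMS : Disjoint M S) (hq : IsPOon S q0)
    {q : Finset (α × α)} (hmem : q ∈ extPOs M S q0) :
    (∀ a : {a : α // a ∈ M}, S.filter (fun y => (a.1, y) ∈ q) ∈ upsets S q0) ∧
    (∀ x ∈ minset S q0, ∃ a : {a : α // a ∈ M}, x ∈ S.filter (fun y => (a.1, y) ∈ q)) ∧
    extMap M q0 (fun a => S.filter (fun y => (a.1, y) ∈ q)) = q := by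
  have hd : ∀ {x : α}, x ∈ M → x ∈ S → False := fun hx hy => Finset.disjoint_left.1 hMS hx hy
  rw [mem_extPOs] at hmem
  obtain ⟨hsub, ⟨hqs', hqr', hqt', hqa'⟩, hres, hmin⟩ := hmem
  have hq0q : q0 ⊆ q := by
    rw [← hres]; exact Finset.filter_subset _ _
  have hq2 : ∀ {x y : α}, (x, y) ∈ q0 → x ∈ S ∧ y ∈ S := fun h => Finset.mem_product.1 (hq.1 h)
  have hmemq : ∀ {x y : α}, (x, y) ∈ q → (x ∈ M ∪ S) ∧ (y ∈ M ∪ S) := fun h =>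
    Finset.mem_product.1 (hsub h)
  refine ⟨?_, ?_, ?_⟩
  · intro a
    rw [mem_upsets]
    refine ⟨Finset.filter_subset _ _, ?_⟩
    intro y hy z hyz
    rw [Finset.mem_filter] at hy
    rw [Finset.mem_filter]
    exact ⟨(hq2 hyz).2, hqt' a.1 y z hy.2 (hq0q hyz)⟩
  · intro x hx
    rw [mem_minset] at hx
    have hxS : x ∈ S := hx.1
    have hxM : x ∉ M := fun h => hd h hxS
    have : ¬ (∀ y, (y, x) ∈ q → y = x) := by
      intro hall
      exact hxM (hmin ▸ mem_minset.2 ⟨Finset.mem_union_right _ hxS, hall⟩)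
    push_neg at this
    obtain ⟨y, hyx, hne⟩ := this
    have hyMS := (hmemq hyx).1
    rcases Finset.mem_union.1 hyMS with hyM | hyS
    · exact ⟨⟨y, hyM⟩, Finset.mem_filter.2 ⟨hxS, hyx⟩⟩
    · exfalso
      apply hne
      apply hx.2
      rw [← hres, restrictRel, Finset.mem_filter]
      exact ⟨hyx, hyS, hxS⟩
  · apply Finset.ext
    rintro ⟨x, y⟩
    rw [mem_extMap]
    constructor
    · rintro (h | ⟨hm, h | h⟩)
      · exact hq0q h
      · exact h ▸ hqr' x (Finset.mem_union_left _ hm)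
      · exact (Finset.mem_filter.1 h).2
    · intro hxy
      have hx := (hmemq hxy).1
      have hy := (hmemq hxy).2
      rcases Finset.mem_union.1 hx with hxM | hxS
      · by_cases hyx : y = x
        · exact Or.inr ⟨hxM, Or.inl hyx⟩
        · have hyS : y ∈ S := by
            rcases Finset.mem_union.1 hy with hyM | hyS
            · exfalso
              have hy' : y ∈ minset (M ∪ S) q := by rw [hmin]; exact hyM
              exact hyx ((mem_minset.1 hy').2 x hxy).symm
            · exact hyS
          exact Or.inr ⟨hxM, Or.inr (Finset.mem_filter.2 ⟨hyS, hxy⟩)⟩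
      · have hyS : y ∈ S := by
          rcases Finset.mem_union.1 hy with hyM | hyS
          · exfalso
            have hy' : y ∈ minset (M ∪ S) q := by rw [hmin]; exact hyM
            exact hd hyM (((mem_minset.1 hy').2 x hxy) ▸ hxS)
          · exact hyS
        refine Or.inl ?_
        rw [← hres, restrictRel, Finset.mem_filter]
        exact ⟨hxy, hxS, hyS⟩

theorem card_extPOs_int (M S : Finset α) (hMS : Disjoint M S) (q0 : Finset (α × α))
    (hq : IsPOon S q0) :
    ((extPOs M S q0).card : ℤ) =
      ∑ B ∈ (minset S q0).powerset, (-1) ^ B.card *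
        (((upsets S q0).filter fun U => Disjoint U B).card : ℤ) ^ M.card := by
  classical
  set T := {a : α // a ∈ M} with hT
  set Us := {U : Finset α // U ∈ upsets S q0} with hUs
  have step1 : (Finset.univ.filter
      (fun f : T → Us => ∀ x ∈ minset S q0, ∃ a : T, x ∈ (f a : Finset α))).card
      = (extPOs M S q0).card := by
    apply Finset.card_bij (fun f _ => extMap M q0 (fun a => (f a : Finset α)))
    · intro f hf
      rw [Finset.mem_filter] at hf
      exact extMap_mem hMS hq _ (fun a => (f a).2) hf.2
    · intro f hf g hg h
      have := extMap_injOn hMS hq.1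
        (fun a => (mem_upsets.1 (f a).2).1) (fun a => (mem_upsets.1 (g a).2).1) h
      funext a
      exact Subtype.ext (congrFun this a)
    · intro q hqmem
      obtain ⟨h1, h2, h3⟩ := extPOs_surj hMS hq hqmem
      exact ⟨fun a => ⟨S.filter (fun y => (a.1, y) ∈ q), h1 a⟩,
        Finset.mem_filter.2 ⟨Finset.mem_univ _, h2⟩, h3⟩
  rw [← step1]
  -- inclusion–exclusion
  have key : ∀ f : T → Us,
      (if (∀ x ∈ minset S q0, ∃ a : T, x ∈ (f a : Finset α)) then (1 : ℤ) else 0)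
      = ∑ B ∈ (minset S q0).powerset, (-1) ^ B.card *
          (if (∀ a : T, Disjoint ((f a : Finset α)) B) then (1 : ℤ) else 0) := by
    intro f
    set u := (minset S q0).filter (fun x => ∀ a : T, x ∉ (f a : Finset α)) with hu
    have h1 : ∀ B ∈ (minset S q0).powerset,
        ((-1 : ℤ) ^ B.card * (if (∀ a : T, Disjoint ((f a : Finset α)) B) then (1:ℤ) else 0))
        = if B ⊆ u then (-1 : ℤ) ^ B.card else 0 := by
      intro B hB
      by_cases hcase : ∀ a : T, Disjoint ((f a : Finset α)) B
      · rw [if_pos hcase, if_pos, mul_one]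
        intro x hxB
        refine Finset.mem_filter.2 ⟨Finset.mem_powerset.1 hB hxB, fun a hxf => ?_⟩
        exact Finset.disjoint_left.1 (hcase a) hxf hxB
      · rw [if_neg hcase, if_neg, mul_zero]
        intro hBu
        apply hcase
        intro a
        refine Finset.disjoint_right.2 ?_
        intro x hxB
        exact (Finset.mem_filter.1 (hBu hxB)).2 a
    rw [Finset.sum_congr rfl h1, ← Finset.sum_filter]
    have h2 : (minset S q0).powerset.filter (· ⊆ u) = u.powerset := by
      ext B
      rw [Finset.mem_filter, Finset.mem_powerset, Finset.mem_powerset]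
      constructor
      · exact fun h => h.2
      · exact fun h => ⟨h.trans (Finset.filter_subset _ _), h⟩
    rw [h2, Finset.sum_powerset_neg_one_pow_card]
    congr 1
    simp only [eq_iff_iff]
    constructor
    · intro hcov
      rw [Finset.eq_empty_iff_forall_notMem]
      intro x hx
      rw [hu, Finset.mem_filter] at hx
      obtain ⟨a, ha⟩ := hcov x hx.1
      exact hx.2 a ha
    · intro hcov x hx
      by_contra hcon
      push_neg at hcon
      have hxu : x ∈ u := Finset.mem_filter.2 ⟨hx, hcon⟩
      rw [hcov] at hxu
      simp at hxu
  have step2 : ((Finset.univ.filter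
      (fun f : T → Us => ∀ x ∈ minset S q0, ∃ a : T, x ∈ (f a : Finset α))).card : ℤ)
      = ∑ B ∈ (minset S q0).powerset, (-1) ^ B.card *
          ((Finset.univ.filter
            (fun f : T → Us => ∀ a : T, Disjoint ((f a : Finset α)) B)).card : ℤ) := by
    rw [← Finset.sum_boole]
    rw [Finset.sum_congr rfl (fun f _ => key f), Finset.sum_comm]
    refine Finset.sum_congr rfl fun B _ => ?_
    rw [← Finset.mul_sum, Finset.sum_boole]
  rw [step2]
  refine Finset.sum_congr rfl fun B _ => ?_
  congr 1
  -- step 3: counting functions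
  have e2 : Fintype.card {u : Us // Disjoint (u : Finset α) B}
      = ((upsets S q0).filter fun U => Disjoint U B).card := by
    rw [Fintype.card_subtype]
    refine Finset.card_bij (fun (u : Us) _ => (u : Finset α)) ?_ ?_ ?_
    · intro u hu
      rw [Finset.mem_filter] at hu
      exact Finset.mem_filter.2 ⟨u.2, hu.2⟩
    · intro u _ v _ h
      exact Subtype.ext h
    · intro U hU
      rw [Finset.mem_filter] at hU
      exact ⟨⟨U, hU.1⟩, Finset.mem_filter.2 ⟨Finset.mem_univ _, hU.2⟩, rfl⟩
  have e1 : (Finset.univ.filter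
      (fun f : T → Us => ∀ a : T, Disjoint ((f a : Finset α)) B)).card
      = Fintype.card {f : T → Us // ∀ a : T, Disjoint ((f a : Finset α)) B} :=
    (Fintype.card_subtype _).symm
  rw [e1, Fintype.card_congr
    (Equiv.subtypePiEquivPi (p := fun (_ : T) (u : Us) => Disjoint (u : Finset α) B)),
    Fintype.card_pi]
  rw [Finset.prod_const, e2]
  push_cast
  congr 1
  exact Fintype.card_coe M
end Main2

/-- Theorem 4.4(4): for the ordinal sum `O ⊕ P` with `O` nonempty,
`e(m, O ⊕ P) = Σ_{B ⊆ Min O} (−1)^{#B} (d(O − B) + d(P) − 1)^m`. -/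
theorem stmt_12 (M X Y : Finset α) (hXY : Disjoint X Y)
    (hM : Disjoint M (X ∪ Y)) (hX : X.Nonempty) (o p : Finset (α × α))
    (ho : IsPOon X o) (hp : IsPOon Y p) :
    ((extPOs M (X ∪ Y) (o ∪ p ∪ X ×ˢ Y)).card : ℤ) =
      ∑ B ∈ (minset X o).powerset,
        (-1) ^ B.card *
          ((dnum (X \ B) (restrictRel o (X \ B)) : ℤ) + (dnum Y p : ℤ) - 1) ^ M.card := by
  rw [card_extPOs_int M (X ∪ Y) hM (o ∪ p ∪ X ×ˢ Y) (isPOon_osum hXY ho hp),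
    minset_osum hXY ho hp hX]
  refine Finset.sum_congr rfl fun B hB => ?_
  rw [card_upsets_filter_osum hXY ho hp hX (Finset.mem_powerset.1 hB)]
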